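/- Every binary reticulation-visible network with n leaves has at most 4(n−1) reticulations. (Theorem 1) -/

import Mathlib

/-!
Common framework: a binary phylogenetic network is modelled as a directed graph
on an ambient type `V`, given by a vertex set `verts : Set V`, an adjacency
relation `adj : V → V → Prop` (no parallel edges are possible in this model),
and a root vertex `root`.
-/

/-- The outdegree of a vertex `v`: the number of its out-neighbours. -/
noncomputable def outdeg {V : Type*} (adj : V → V → Prop) (v : V) : ℕ :=
  {u | adj v u}.ncard

/-- The indegree of a vertex `v`: the number of its in-neighbours. -/
noncomputable def indeg {V : Type*} (adj : V → V → Prop) (v : V) : ℕ :=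
  {u | adj u v}.ncard

/-- A leaf of the network: a vertex with outdegree 0. -/
def IsLeaf {V : Type*} (verts : Set V) (adj : V → V → Prop) (v : V) : Prop :=
  v ∈ verts ∧ outdeg adj v = 0

/-- A tree vertex: indegree 1 and outdegree 2. -/
def IsTreeVertex {V : Type*} (adj : V → V → Prop) (v : V) : Prop :=
  indeg adj v = 1 ∧ outdeg adj v = 2

/-- A reticulation: indegree 2 and outdegree 1. -/
def IsReticulation {V : Type*} (adj : V → V → Prop) (v : V) : Prop :=
  indeg adj v = 2 ∧ outdeg adj v = 1

/-- `l` is a directed path from `a` to `b`: a nonempty list of vertices starting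
at `a`, ending at `b`, each consecutive pair joined by an edge. -/
def IsPathFromTo {V : Type*} (adj : V → V → Prop) (l : List V) (a b : V) : Prop :=
  l.Chain' adj ∧ l.head? = some a ∧ l.getLast? = some b

/-- A binary phylogenetic network: a finite DAG with a unique root (the only
vertex of indegree 0) of outdegree 2, in which every vertex is reachable from
the root, every leaf has indegree 1, and every other non-root vertex is either
a tree vertex or a reticulation. -/
structure IsBinaryNetwork {V : Type*} (verts : Set V) (adj : V → V → Prop) (root : V) : Prop where
  finite_verts : verts.Finite
  root_mem : root ∈ verts
  adj_mem : ∀ ⦃u v : V⦄, adj u v → u ∈ verts ∧ v ∈ verts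
  acyclic : ∀ v : V, ¬ Relation.TransGen adj v v
  root_indeg : indeg adj root = 0
  root_outdeg : outdeg adj root = 2
  root_unique : ∀ v ∈ verts, indeg adj v = 0 → v = root
  reach : ∀ v ∈ verts, Relation.ReflTransGen adj root v
  leaf_indeg : ∀ v ∈ verts, outdeg adj v = 0 → indeg adj v = 1
  internal_deg : ∀ v ∈ verts, v ≠ root → outdeg adj v ≠ 0 →
      IsTreeVertex adj v ∨ IsReticulation adj v

/-- `x` is stable: there is a leaf `ℓ` such that `x` lies on every directed
path from the root to `ℓ`. -/
def Stable {V : Type*} (verts : Set V) (adj : V → V → Prop) (root x : V) : Prop :=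
  ∃ ℓ, IsLeaf verts adj ℓ ∧ ∀ l : List V, IsPathFromTo adj l root ℓ → x ∈ l

/-- A network is reticulation-visible if every reticulation is stable. -/
def ReticulationVisible {V : Type*} (verts : Set V) (adj : V → V → Prop) (root : V) : Prop :=
  ∀ v ∈ verts, IsReticulation adj v → Stable verts adj root v

/-- A network is nearly stable if every vertex is stable or all of its parents
are stable. -/
def NearlyStable {V : Type*} (verts : Set V) (adj : V → V → Prop) (root : V) : Prop :=
  ∀ v ∈ verts, Stable verts adj root v ∨ ∀ p : V, adj p v → Stable verts adj root p

/-!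
Deleting the reticulations splits the network into tree components, each headed by the root or
by the child of a reticulation; distinct reticulations have distinct children, so there are
`r + 1` components, and at most `n` of them contain a leaf. Visibility rules out an edge between
two reticulations and a head whose two children are both reticulations, so a leafless component
has `c ≥ 2` vertices, all of outdegree 2, and being a tree it sends `c + 1 ≥ 3` edges into
reticulations. There are only `2r` such edges, so `3 (r + 1 - n) ≤ 2r`, i.e. `r ≤ 3 (n - 1)`.
-/

open Relation

theorem Set.ncard_mul_le_ncard_mul {α β : Type*} {s : Set α} {t : Set β} (r : α → β → Prop)
    {m n : ℕ} (hs : s.Finite) (ht : t.Finite) (hm : ∀ a ∈ s, m ≤ {b ∈ t | r a b}.ncard)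
    (hn : ∀ b ∈ t, {a ∈ s | r a b}.ncard ≤ n) : s.ncard * m ≤ t.ncard * n := by
  classical
  obtain ⟨s, rfl⟩ := hs.exists_finset_coe
  obtain ⟨t, rfl⟩ := ht.exists_finset_coe
  simp only [Set.ncard_coe_finset]
  refine Finset.card_mul_le_card_mul r (fun a ha => ?_) (fun b hb => ?_)
  · rw [Finset.bipartiteAbove, ← Set.ncard_coe_finset, Finset.coe_filter]; exact hm a ha
  · rw [Finset.bipartiteBelow, ← Set.ncard_coe_finset, Finset.coe_filter]; exact hn b hb

theorem Set.ncard_le_ncard_of_forall_subsingleton {α β : Type*} {s : Set α} {t : Set β}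
    (r : α → β → Prop) (hs : s.Finite) (ht : t.Finite) (hst : ∀ a ∈ s, ∃ b ∈ t, r a b)
    (hts : ∀ b ∈ t, {a ∈ s | r a b}.Subsingleton) : s.ncard ≤ t.ncard := by
  simpa using Set.ncard_mul_le_ncard_mul r hs ht (m := 1) (n := 1)
    (fun a ha => (Set.ncard_pos (ht.subset fun _ hb => hb.1)).2 (hst a ha))
    (fun b hb => (Set.ncard_le_one (hs.subset fun _ ha => ha.1)).2 (hts b hb))

section Paths

variable {V : Type*} {adj : V → V → Prop} {l l₁ l₂ : List V} {a b c d x : V}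

theorem IsPathFromTo.reflTransGen_of_mem (h : IsPathFromTo adj l a b) (hx : x ∈ l) :
    ReflTransGen adj a x ∧ ReflTransGen adj x b := by
  obtain ⟨hl, ha, hb⟩ := h
  refine ⟨hl.induction (ReflTransGen adj a ·) _ (fun _ _ hyz hay => hay.tail hyz) ?_ x hx,
    hl.backwards_induction (ReflTransGen adj · b) _ (fun _ _ hyz hzb => hzb.head hyz) ?_ x hx⟩
  · intro hne
    rw [List.head?_eq_some_head hne, Option.some.injEq] at ha
    rw [ha]
  · intro hne
    rw [List.getLast?_eq_some_getLast hne, Option.some.injEq] at hb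
    rw [hb]

theorem IsPathFromTo.append (h₁ : IsPathFromTo adj l₁ a b) (h₂ : IsPathFromTo adj l₂ c d)
    (hbc : adj b c) : IsPathFromTo adj (l₁ ++ l₂) a d := by
  obtain ⟨hl₁, ha, hb⟩ := h₁
  obtain ⟨hl₂, hc, hd⟩ := h₂
  refine ⟨List.isChain_append.2 ⟨hl₁, hl₂, ?_⟩, ?_, ?_⟩
  · simpa [hb, hc] using hbc
  · rw [List.head?_append, ha]; rfl
  · rw [List.getLast?_append, hd]; rfl

theorem exists_isPathFromTo (h : ReflTransGen adj a b) : ∃ l, IsPathFromTo adj l a b := by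
  obtain ⟨l, hl, hb⟩ := List.exists_isChain_cons_of_relationReflTransGen h
  exact ⟨a :: l, hl, rfl, by rw [List.getLast?_eq_some_getLast (List.cons_ne_nil a l), hb]⟩

end Paths

section Degrees

variable {V : Type*} {adj : V → V → Prop} {u v a b c x : V}

theorem eq_of_adj_of_outdeg_eq_one (hu : outdeg adj u = 1) (ha : adj u a) (hb : adj u b) :
    a = b := by
  obtain ⟨c, hc⟩ := Set.ncard_eq_one.1 hu
  have ha' : a ∈ {y | adj u y} := ha
  have hb' : b ∈ {y | adj u y} := hb
  rw [hc] at ha' hb'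
  exact ha'.trans hb'.symm

theorem eq_of_adj_of_indeg_eq_one (hv : indeg adj v = 1) (ha : adj a v) (hb : adj b v) : a = b :=
  eq_of_adj_of_outdeg_eq_one (adj := flip adj) hv ha hb

theorem exists_adj_of_outdeg_ne_zero (hu : outdeg adj u ≠ 0) : ∃ c, adj u c :=
  Set.nonempty_of_ncard_ne_zero hu

theorem IsReticulation.exists_adj_ne (hv : IsReticulation adj v) (u : V) :
    ∃ p, adj p v ∧ p ≠ u :=
  Set.exists_ne_of_one_lt_ncard (s := {p | adj p v})
    (by have := hv.1; unfold indeg at this; omega) u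

theorem ncard_setOf_adj_and_fst_eq (adj : V → V → Prop) (u : V) :
    {e : V × V | adj e.1 e.2 ∧ e.1 = u}.ncard = outdeg adj u := by
  have : {e : V × V | adj e.1 e.2 ∧ e.1 = u} = Prod.mk u '' {y | adj u y} := by
    ext ⟨a, b⟩
    simp only [Set.mem_image, Prod.mk.injEq]
    constructor
    · rintro ⟨hab, rfl⟩; exact ⟨b, hab, rfl, rfl⟩
    · rintro ⟨b, hb, rfl, rfl⟩; exact ⟨hb, rfl⟩
  rw [this, Set.ncard_image_of_injective _ (Prod.mk_right_injective u), outdeg]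

theorem ncard_setOf_adj_and_snd_eq (adj : V → V → Prop) (v : V) :
    {e : V × V | adj e.1 e.2 ∧ e.2 = v}.ncard = indeg adj v := by
  have : {e : V × V | adj e.1 e.2 ∧ e.2 = v} = (·, v) '' {u | adj u v} := by
    ext ⟨a, b⟩
    simp only [Set.mem_image, Prod.mk.injEq]
    constructor
    · rintro ⟨hab, rfl⟩; exact ⟨a, hab, rfl, rfl⟩
    · rintro ⟨a, ha, rfl, rfl⟩; exact ⟨ha, rfl⟩
  rw [this, Set.ncard_image_of_injective _ (Prod.mk_left_injective v), indeg]

theorem ncard_mul_le_ncard_outEdges {s : Set V} {d : ℕ} (hs : s.Finite)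
    (hE : {e : V × V | e.1 ∈ s ∧ adj e.1 e.2}.Finite) (hd : ∀ x ∈ s, outdeg adj x = d) :
    s.ncard * d ≤ {e : V × V | e.1 ∈ s ∧ adj e.1 e.2}.ncard := by
  refine (Set.ncard_mul_le_ncard_mul (fun x e => e.1 = x) hs hE (fun x hx => ?_)
    fun e _ => ?_).trans_eq (mul_one _)
  · have : {e ∈ {e : V × V | e.1 ∈ s ∧ adj e.1 e.2} | e.1 = x} =
        {e | adj e.1 e.2 ∧ e.1 = x} := by
      ext e
      constructor
      · rintro ⟨⟨-, he⟩, rfl⟩; exact ⟨he, rfl⟩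
      · rintro ⟨he, rfl⟩; exact ⟨⟨hx, he⟩, rfl⟩
    rw [this, ncard_setOf_adj_and_fst_eq, hd x hx]
  · exact (Set.ncard_le_ncard (fun x hx => hx.2.symm) (Set.finite_singleton e.1)).trans_eq
      (Set.ncard_singleton _)

theorem reflTransGen_of_outdeg_eq_one (hu : outdeg adj u = 1) (huc : adj u c)
    (h : ReflTransGen adj u x) (hx : u ≠ x) : ReflTransGen adj c x := by
  obtain rfl | ⟨c', huc', hc'x⟩ := h.cases_head
  · exact absurd rfl hx
  · rwa [eq_of_adj_of_outdeg_eq_one hu huc huc']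

end Degrees

section Acyclic

variable {V : Type*} {adj : V → V → Prop} {t u v w p q : V}

theorem not_reflTransGen_of_adj (hacyc : ∀ v, ¬ TransGen adj v v) (huv : adj u v) :
    ¬ ReflTransGen adj v u :=
  fun hvu => hacyc u (.head' huv hvu)

theorem reflTransGen_of_transGen_of_adj (hacyc : ∀ v, ¬ TransGen adj v v)
    (hch : ∀ c, adj t c → c = v ∨ c = w) (hpv : adj p v) (htp : TransGen adj t p) :
    ReflTransGen adj w p := by
  obtain ⟨c, htc, hcp⟩ := TransGen.head'_iff.1 htp
  rcases hch c htc with rfl | rfl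
  · exact absurd hcp (not_reflTransGen_of_adj hacyc hpv)
  · exact hcp

/-- Otherwise `v ⇝ q → w ⇝ p → v` would be a cycle. -/
theorem not_transGen_of_transGen (hacyc : ∀ v, ¬ TransGen adj v v)
    (hch : ∀ c, adj t c → c = v ∨ c = w) (hpv : adj p v) (hqw : adj q w)
    (htq : TransGen adj t q) : ¬ TransGen adj t p := fun htp =>
  not_reflTransGen_of_adj hacyc hpv <|
    ((reflTransGen_of_transGen_of_adj hacyc (fun c hc => (hch c hc).symm) hqw htq).tail hqw).trans
      (reflTransGen_of_transGen_of_adj hacyc hch hpv htp)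

end Acyclic

namespace IsBinaryNetwork

variable {V : Type*} {verts : Set V} {adj : V → V → Prop} {root : V} {u v w x y p q t ℓ : V}

theorem finite_edges (hN : IsBinaryNetwork verts adj root) :
    {e : V × V | adj e.1 e.2}.Finite :=
  (hN.finite_verts.prod hN.finite_verts).subset fun _ he => hN.adj_mem he

theorem finite_reticulations (hN : IsBinaryNetwork verts adj root) :
    {v | IsReticulation adj v}.Finite :=
  hN.finite_verts.subset fun v hv =>
    let ⟨_, hp, _⟩ := IsReticulation.exists_adj_ne hv v
    (hN.adj_mem hp).2

theorem not_adj_root (hN : IsBinaryNetwork verts adj root) : ¬ adj u root := fun hu => by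
  have : {u | adj u root} = ∅ :=
    (Set.ncard_eq_zero (hN.finite_verts.subset fun _ hu => (hN.adj_mem hu).1)).1 hN.root_indeg
  exact this.subset hu

theorem not_adj_of_isLeaf (hN : IsBinaryNetwork verts adj root) (hℓ : IsLeaf verts adj ℓ) :
    ¬ adj ℓ y := fun hy => by
  have : {y | adj ℓ y} = ∅ :=
    (Set.ncard_eq_zero (hN.finite_verts.subset fun _ hy => (hN.adj_mem hy).2)).1 hℓ.2
  exact this.subset hy

theorem eq_of_adj_of_adj (hN : IsBinaryNetwork verts adj root) (hx : ¬ IsReticulation adj x)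
    (hp : adj p x) (hq : adj q x) : p = q := by
  have hxv := (hN.adj_mem hp).2
  have hxr : x ≠ root := by rintro rfl; exact hN.not_adj_root hp
  refine eq_of_adj_of_indeg_eq_one ?_ hp hq
  by_cases h0 : outdeg adj x = 0
  · exact hN.leaf_indeg x hxv h0
  · exact ((hN.internal_deg x hxv hxr h0).resolve_right hx).1

theorem outdeg_eq_two (hN : IsBinaryNetwork verts adj root) (hx : x ∈ verts)
    (hnr : ¬ IsReticulation adj x) (h0 : outdeg adj x ≠ 0) : outdeg adj x = 2 := by
  by_cases hxr : x = root
  · exact hxr ▸ hN.root_outdeg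
  · exact ((hN.internal_deg x hx hxr h0).resolve_right hnr).2

theorem transGen_of_mem (hN : IsBinaryNetwork verts adj root) (hx : x ∈ verts)
    (hxr : x ≠ root) : TransGen adj root x :=
  (reflTransGen_iff_eq_or_transGen.1 (hN.reach x hx)).resolve_left hxr

theorem exists_leaf_of_stable (hN : IsBinaryNetwork verts adj root)
    (hx : Stable verts adj root x) :
    ∃ ℓ, IsLeaf verts adj ℓ ∧ ReflTransGen adj x ℓ ∧
      ∀ ⦃p y⦄, adj p y → ReflTransGen adj y ℓ →
        ReflTransGen adj x p ∨ ReflTransGen adj y x := by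
  obtain ⟨ℓ, hℓ, hall⟩ := hx
  obtain ⟨P, hP⟩ := exists_isPathFromTo (hN.reach ℓ hℓ.1)
  refine ⟨ℓ, hℓ, (hP.reflTransGen_of_mem (hall P hP)).2, fun p y hpy hyℓ => ?_⟩
  obtain ⟨P₁, hP₁⟩ := exists_isPathFromTo (hN.reach p (hN.adj_mem hpy).1)
  obtain ⟨P₂, hP₂⟩ := exists_isPathFromTo hyℓ
  rcases List.mem_append.1 (hall _ (hP₁.append hP₂ hpy)) with hx | hx
  · exact .inl (hP₁.reflTransGen_of_mem hx).2
  · exact .inr (hP₂.reflTransGen_of_mem hx).1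

theorem not_isReticulation_of_adj (hN : IsBinaryNetwork verts adj root)
    (hRV : ReticulationVisible verts adj root) (hu : IsReticulation adj u) (huv : adj u v) :
    ¬ IsReticulation adj v := by
  intro hv
  obtain ⟨ℓ, hℓ, huℓ, hsep⟩ :=
    hN.exists_leaf_of_stable (hRV u (hN.adj_mem huv).1 hu)
  have hvℓ : ReflTransGen adj v ℓ := reflTransGen_of_outdeg_eq_one hu.2 huv huℓ
    (by rintro rfl; exact hN.not_adj_of_isLeaf hℓ huv)
  obtain ⟨p, hpv, hpu⟩ := hv.exists_adj_ne u
  rcases hsep hpv hvℓ with hup | hvu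
  · exact not_reflTransGen_of_adj hN.acyclic hpv
      (reflTransGen_of_outdeg_eq_one hu.2 huv hup hpu.symm)
  · exact not_reflTransGen_of_adj hN.acyclic huv hvu

theorem transGen_of_isReticulation_parent (hN : IsBinaryNetwork verts adj root)
    (hRV : ReticulationVisible verts adj root) (hu : IsReticulation adj u) (hut : adj u t)
    (hch : ∀ c, adj t c ↔ c = v ∨ c = w) (hpv : adj p v) (hpt : p ≠ t) (hqw : adj q w)
    (hqt : q ≠ t) : TransGen adj t p ∧ TransGen adj t q := by
  obtain ⟨ℓ, hℓ, huℓ, hsep⟩ := hN.exists_leaf_of_stable (hRV u (hN.adj_mem hut).1 hu)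
  -- otherwise the path `root ⇝ a → c ⇝ ℓ` would avoid `u`
  have below : ∀ {c a}, adj t c → adj a c → a ≠ t → ReflTransGen adj c ℓ →
      TransGen adj t a := by
    intro c a htc hac hat hcℓ
    rcases hsep hac hcℓ with hua | hcu
    · have hua' : u ≠ a := by
        rintro rfl
        exact hN.acyclic t (.single (eq_of_adj_of_outdeg_eq_one hu.2 hac hut ▸ htc))
      exact (reflTransGen_iff_eq_or_transGen.1
        (reflTransGen_of_outdeg_eq_one hu.2 hut hua hua')).resolve_left hat
    · exact absurd (hcu.tail hut) (not_reflTransGen_of_adj hN.acyclic htc)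
  have hch' : ∀ c, adj t c → c = v ∨ c = w := fun c => (hch c).1
  have htℓ := reflTransGen_of_outdeg_eq_one hu.2 hut huℓ
    (by rintro rfl; exact hN.not_adj_of_isLeaf hℓ hut)
  obtain rfl | ⟨c, htc, hcℓ⟩ := htℓ.cases_head
  · exact absurd ((hch v).2 (.inl rfl)) (hN.not_adj_of_isLeaf hℓ)
  rcases hch' c htc with rfl | rfl
  · have htp := below htc hpv hpt hcℓ
    exact ⟨htp, below ((hch w).2 (.inr rfl)) hqw hqt
      (((reflTransGen_of_transGen_of_adj hN.acyclic hch' hpv htp).tail hpv).trans hcℓ)⟩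
  · have htq := below htc hqw hqt hcℓ
    refine ⟨below ((hch v).2 (.inl rfl)) hpv hpt ?_, htq⟩
    exact ((reflTransGen_of_transGen_of_adj hN.acyclic (fun c hc => (hch' c hc).symm) hqw
      htq).tail hqw).trans hcℓ

end IsBinaryNetwork

section TreeComponents

variable {V : Type*}

def TreeAdj (adj : V → V → Prop) (v w : V) : Prop :=
  adj v w ∧ ¬ IsReticulation adj v ∧ ¬ IsReticulation adj w

/-- For a component head `h`, `treeComponent adj h` is the connected component of `h` in the
network with its reticulations deleted; it is a tree hanging from `h`. -/
def treeComponent (adj : V → V → Prop) (h : V) : Set V :=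
  {x | ReflTransGen (TreeAdj adj) h x}

def IsComponentHead (verts : Set V) (adj : V → V → Prop) (root h : V) : Prop :=
  h ∈ verts ∧ ¬ IsReticulation adj h ∧ (h = root ∨ ∃ u, adj u h ∧ IsReticulation adj u)

def reticulationEdges (adj : V → V → Prop) : Set (V × V) :=
  {e | adj e.1 e.2 ∧ IsReticulation adj e.2}

variable {verts : Set V} {adj : V → V → Prop} {root h h' x z : V}

theorem mem_treeComponent_self : h ∈ treeComponent adj h := ReflTransGen.refl

theorem not_isReticulation_of_mem_treeComponent (hh : ¬ IsReticulation adj h)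
    (hx : x ∈ treeComponent adj h) : ¬ IsReticulation adj x := by
  rcases hx.cases_tail with rfl | ⟨z, -, hzx⟩
  exacts [hh, hzx.2.2]

theorem IsBinaryNetwork.mem_of_mem_treeComponent (hN : IsBinaryNetwork verts adj root)
    (hh : h ∈ verts) (hx : x ∈ treeComponent adj h) : x ∈ verts := by
  rcases hx.cases_tail with rfl | ⟨z, -, hzx⟩
  exacts [hh, (hN.adj_mem hzx.1).2]

theorem IsBinaryNetwork.finite_treeComponent (hN : IsBinaryNetwork verts adj root)
    (hh : h ∈ verts) : (treeComponent adj h).Finite :=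
  hN.finite_verts.subset fun _ => hN.mem_of_mem_treeComponent hh

namespace IsComponentHead

theorem not_treeAdj (hN : IsBinaryNetwork verts adj root)
    (hh : IsComponentHead verts adj root h) : ¬ TreeAdj adj z h := by
  rintro ⟨hzh, hz, -⟩
  rcases hh.2.2 with rfl | ⟨u, huh, hu⟩
  · exact hN.not_adj_root hzh
  · exact hz (hN.eq_of_adj_of_adj hh.2.1 huh hzh ▸ hu)

theorem eq_of_mem_treeComponent (hN : IsBinaryNetwork verts adj root)
    (hh : IsComponentHead verts adj root h) (hh' : IsComponentHead verts adj root h')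
    (hx : x ∈ treeComponent adj h) (hx' : x ∈ treeComponent adj h') : h = h' := by
  induction hx with
  | refl =>
    rcases hx'.cases_tail with rfl | ⟨z, -, hzh⟩
    · rfl
    · exact absurd hzh (hh.not_treeAdj hN)
  | tail _ hyx ih =>
    rcases hx'.cases_tail with rfl | ⟨z, hz, hzx⟩
    · exact absurd hyx (hh'.not_treeAdj hN)
    · rw [hN.eq_of_adj_of_adj hyx.2.2 hzx.1 hyx.1] at hz
      exact ih hz

/-- Otherwise the other parents of the two children would both lie strictly below the head. -/
theorem exists_adj_not_isReticulation (hN : IsBinaryNetwork verts adj root)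
    (hRV : ReticulationVisible verts adj root) (hh : IsComponentHead verts adj root h)
    (h2 : outdeg adj h = 2) : ∃ c, adj h c ∧ ¬ IsReticulation adj c := by
  by_contra! hall
  obtain ⟨v, w, -, hvw⟩ := Set.ncard_eq_two.1 h2
  have hch : ∀ c, adj h c ↔ c = v ∨ c = w := fun c => Set.ext_iff.1 hvw c
  obtain ⟨p, hpv, hph⟩ := (hall v ((hch v).2 (.inl rfl))).exists_adj_ne h
  obtain ⟨q, hqw, hqh⟩ := (hall w ((hch w).2 (.inr rfl))).exists_adj_ne h
  have hbelow : TransGen adj h p ∧ TransGen adj h q := by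
    rcases hh.2.2 with rfl | ⟨u, huh, hu⟩
    · exact ⟨hN.transGen_of_mem (hN.adj_mem hpv).1 hph,
        hN.transGen_of_mem (hN.adj_mem hqw).1 hqh⟩
    · exact hN.transGen_of_isReticulation_parent hRV hu huh hch hpv hph hqw hqh
  exact not_transGen_of_transGen hN.acyclic (fun c => (hch c).1) hpv hqw hbelow.2 hbelow.1

theorem one_lt_ncard_treeComponent (hN : IsBinaryNetwork verts adj root)
    (hRV : ReticulationVisible verts adj root) (hh : IsComponentHead verts adj root h)
    (hleaf : ∀ x ∈ treeComponent adj h, ¬ IsLeaf verts adj x) :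
    1 < (treeComponent adj h).ncard := by
  have h2 : outdeg adj h = 2 :=
    hN.outdeg_eq_two hh.1 hh.2.1 fun h0 => hleaf h mem_treeComponent_self ⟨hh.1, h0⟩
  obtain ⟨c, hhc, hc⟩ := hh.exists_adj_not_isReticulation hN hRV h2
  refine (Set.one_lt_ncard_iff (hN.finite_treeComponent hh.1)).2
    ⟨h, c, mem_treeComponent_self, .single ⟨hhc, hh.2.1, hc⟩, ?_⟩
  rintro rfl
  exact hN.acyclic h (.single hhc)

theorem ncard_treeEdges_lt (hN : IsBinaryNetwork verts adj root)
    (hh : IsComponentHead verts adj root h) :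
    {e : V × V | e.1 ∈ treeComponent adj h ∧ TreeAdj adj e.1 e.2}.ncard <
      (treeComponent adj h).ncard := by
  have hC := hN.finite_treeComponent hh.1
  refine lt_of_le_of_lt ?_ (Set.ncard_sdiff_singleton_lt_of_mem mem_treeComponent_self hC)
  refine Set.ncard_le_ncard_of_injOn Prod.snd (fun e ⟨he, hee⟩ => ⟨he.tail hee, ?_⟩)
    (fun e ⟨_, he⟩ e' ⟨_, he'⟩ hee' => ?_) hC.sdiff
  · rintro (rfl : e.2 = h)
    exact hh.not_treeAdj hN hee
  · exact Prod.ext (hN.eq_of_adj_of_adj he.2.2 he.1 (hee' ▸ he'.1)) hee'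

/-- A leafless component with `c` vertices, all of outdegree 2, has `c - 1` internal edges, so at
least `c + 1 ≥ 3` edges leave it. -/
theorem three_le_ncard_exits (hN : IsBinaryNetwork verts adj root)
    (hRV : ReticulationVisible verts adj root) (hh : IsComponentHead verts adj root h)
    (hleaf : ∀ x ∈ treeComponent adj h, ¬ IsLeaf verts adj x) :
    3 ≤ {e ∈ reticulationEdges adj | e.1 ∈ treeComponent adj h}.ncard := by
  set C := treeComponent adj h
  have hC : C.Finite := hN.finite_treeComponent hh.1
  have hout : C.ncard * 2 ≤ {e : V × V | e.1 ∈ C ∧ adj e.1 e.2}.ncard :=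
    ncard_mul_le_ncard_outEdges hC (hN.finite_edges.subset fun _ he => he.2) fun x hx =>
      hN.outdeg_eq_two (hN.mem_of_mem_treeComponent hh.1 hx)
        (not_isReticulation_of_mem_treeComponent hh.2.1 hx)
        fun h0 => hleaf x hx ⟨hN.mem_of_mem_treeComponent hh.1 hx, h0⟩
  have hsplit : {e : V × V | e.1 ∈ C ∧ adj e.1 e.2} ⊆
      {e ∈ reticulationEdges adj | e.1 ∈ C} ∪ {e | e.1 ∈ C ∧ TreeAdj adj e.1 e.2} := by
    rintro e ⟨he, hadj⟩
    by_cases hr : IsReticulation adj e.2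
    · exact .inl ⟨⟨hadj, hr⟩, he⟩
    · exact .inr ⟨he, hadj, not_isReticulation_of_mem_treeComponent hh.2.1 he, hr⟩
  have hunion := (Set.ncard_le_ncard hsplit ((hN.finite_edges.subset fun _ he => he.1.1).union
    (hN.finite_edges.subset fun _ he => he.2.1))).trans (Set.ncard_union_le _ _)
  have hinternal : {e : V × V | e.1 ∈ C ∧ TreeAdj adj e.1 e.2}.ncard < C.ncard :=
    hh.ncard_treeEdges_lt hN
  have hC2 : 1 < C.ncard := hh.one_lt_ncard_treeComponent hN hRV hleaf
  omega

end IsComponentHead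

end TreeComponents

namespace IsBinaryNetwork

variable {V : Type*} {verts : Set V} {adj : V → V → Prop} {root : V}

theorem finite_componentHeads (hN : IsBinaryNetwork verts adj root) :
    {h | IsComponentHead verts adj root h}.Finite :=
  hN.finite_verts.subset fun _ hh => hh.1

/-- Each reticulation's child heads a component, and so does the root. -/
theorem ncard_reticulations_lt_ncard_componentHeads (hN : IsBinaryNetwork verts adj root)
    (hRV : ReticulationVisible verts adj root) :
    {v | IsReticulation adj v}.ncard < {h | IsComponentHead verts adj root h}.ncard := by
  have hroot : IsComponentHead verts adj root root :=
    ⟨hN.root_mem, fun hr => by simpa [hN.root_indeg] using hr.1, .inl rfl⟩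
  refine lt_of_le_of_lt ?_ (Set.ncard_sdiff_singleton_lt_of_mem hroot hN.finite_componentHeads)
  refine Set.ncard_le_ncard_of_forall_subsingleton adj hN.finite_reticulations
    hN.finite_componentHeads.sdiff (fun v hv => ?_) fun c hc => ?_
  · obtain ⟨c, hvc⟩ := exists_adj_of_outdeg_ne_zero (hv.2.trans_ne one_ne_zero)
    have hc : IsComponentHead verts adj root c :=
      ⟨(hN.adj_mem hvc).2, hN.not_isReticulation_of_adj hRV hv hvc, .inr ⟨v, hvc, hv⟩⟩
    exact ⟨c, ⟨hc, fun (hcr : c = root) => hN.not_adj_root (hcr ▸ hvc)⟩, hvc⟩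
  · exact fun u hu u' hu' => hN.eq_of_adj_of_adj hc.1.2.1 hu.2 hu'.2

theorem ncard_leafyHeads_le (hN : IsBinaryNetwork verts adj root) :
    {h | IsComponentHead verts adj root h ∧
        ∃ x ∈ treeComponent adj h, IsLeaf verts adj x}.ncard ≤
      {v | IsLeaf verts adj v}.ncard :=
  Set.ncard_le_ncard_of_forall_subsingleton (fun h x => x ∈ treeComponent adj h)
    (hN.finite_componentHeads.subset fun _ hh => hh.1) (hN.finite_verts.subset fun _ hx => hx.1)
    (fun _ ⟨_, x, hx, hxl⟩ => ⟨x, hxl, hx⟩)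
    fun _ _ _ hh _ hh' => hh.1.1.eq_of_mem_treeComponent hN hh'.1.1 hh.2 hh'.2

theorem three_mul_ncard_leaflessHeads_le (hN : IsBinaryNetwork verts adj root)
    (hRV : ReticulationVisible verts adj root) :
    3 * {h | IsComponentHead verts adj root h ∧
        ∀ x ∈ treeComponent adj h, ¬ IsLeaf verts adj x}.ncard ≤
      (reticulationEdges adj).ncard := by
  set leafless := {h | IsComponentHead verts adj root h ∧
    ∀ x ∈ treeComponent adj h, ¬ IsLeaf verts adj x}
  have hL : leafless.Finite := hN.finite_componentHeads.subset fun _ hh => hh.1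
  have hE : (reticulationEdges adj).Finite := hN.finite_edges.subset fun _ he => he.1
  have := Set.ncard_mul_le_ncard_mul (fun h e => e.1 ∈ treeComponent adj h) (m := 3) (n := 1)
    hL hE (fun _ hh => hh.1.three_le_ncard_exits hN hRV hh.2) fun _ _ =>
      (Set.ncard_le_one (hL.subset fun _ hh => hh.1)).2
        fun _ hh _ hh' => hh.1.1.eq_of_mem_treeComponent hN hh'.1.1 hh.2 hh'.2
  omega

theorem ncard_reticulationEdges_le (hN : IsBinaryNetwork verts adj root) :
    (reticulationEdges adj).ncard ≤ 2 * {v | IsReticulation adj v}.ncard := by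
  have hE : (reticulationEdges adj).Finite := hN.finite_edges.subset fun _ he => he.1
  have := Set.ncard_mul_le_ncard_mul (fun e v => e.2 = v) (m := 1) (n := 2)
    hE hN.finite_reticulations (fun e he => ?_) fun v hv => ?_
  · omega
  · exact (Set.ncard_pos ((Set.finite_singleton e.2).subset fun _ hv => hv.2.symm)).2
      ⟨e.2, he.2, rfl⟩
  · have : {e ∈ reticulationEdges adj | e.2 = v} = {e | adj e.1 e.2 ∧ e.2 = v} := by
      ext e
      constructor
      · rintro ⟨⟨he, -⟩, rfl⟩; exact ⟨he, rfl⟩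
      · rintro ⟨he, rfl⟩; exact ⟨⟨he, hv⟩, rfl⟩
    rw [this, ncard_setOf_adj_and_snd_eq, hv.1]

end IsBinaryNetwork

/-- Theorem 1: every binary reticulation-visible network with `n` leaves has
at most `4 * (n - 1)` reticulations. -/
theorem reticulationVisible_reticulation_bound {V : Type*} (verts : Set V)
    (adj : V → V → Prop) (root : V) (hN : IsBinaryNetwork verts adj root)
    (hRV : ReticulationVisible verts adj root) :
    {v : V | IsReticulation adj v}.ncard ≤
      4 * ({v : V | IsLeaf verts adj v}.ncard - 1) := by
  set leafy := {h | IsComponentHead verts adj root h ∧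
    ∃ x ∈ treeComponent adj h, IsLeaf verts adj x}
  set leafless := {h | IsComponentHead verts adj root h ∧
    ∀ x ∈ treeComponent adj h, ¬ IsLeaf verts adj x}
  have hheads : {h | IsComponentHead verts adj root h} = leafy ∪ leafless := by
    ext h
    simp only [leafy, leafless, Set.mem_union, Set.mem_ofPred_eq, ← and_or_left]
    exact (and_iff_left ((em _).imp_right fun hl x hx hxl => hl ⟨x, hx, hxl⟩)).symm
  have hR := hN.ncard_reticulations_lt_ncard_componentHeads hRV
  have hleafy : leafy.ncard ≤ _ := hN.ncard_leafyHeads_le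
  have hleafless : 3 * leafless.ncard ≤ _ :=
    (hN.three_mul_ncard_leaflessHeads_le hRV).trans hN.ncard_reticulationEdges_le
  rw [hheads] at hR
  have hunion := Set.ncard_union_le leafy leafless
  omega
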